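/- arXiv:math/0610637 — 7 statements merged into one kernel-verified Lean document; each statement's English description precedes it below -/
import Mathlib

section
/- If U = [[A, B], [C, D]] : X ⊕ U → X ⊕ Y is a coisometric operator between Hilbert spaces (i.e., U U* = I) and S(λ) = D + λ C (I - λA)⁻¹ B for λ in the open unit disk, then for all λ, ζ in the unit disk, (I - S(λ)S(ζ)*)/(1 - λ·conj(ζ)) = C (I - λA)⁻¹ (I - conj(ζ) A*)⁻¹ C*. -/
set_option maxHeartbeats 1000000


open ContinuousLinearMap in
/-- If `U = [[A, B], [C, D]] : X ⊕ U → X ⊕ Y` is coisometric (`U U* = I`, stated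
blockwise) and `S(λ) = D + λ C (I - λA)⁻¹ B` on the unit disk, then
`(I - S(λ)S(ζ)*)/(1 - λ conj ζ) = C (I - λA)⁻¹ (I - conj ζ A*)⁻¹ C*`. -/
theorem stmt0
    {X U Y : Type*}
    [NormedAddCommGroup X] [InnerProductSpace ℂ X] [CompleteSpace X]
    [NormedAddCommGroup U] [InnerProductSpace ℂ U] [CompleteSpace U]
    [NormedAddCommGroup Y] [InnerProductSpace ℂ Y] [CompleteSpace Y]
    (A : X →L[ℂ] X) (B : U →L[ℂ] X) (C : X →L[ℂ] Y) (D : U →L[ℂ] Y)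
    (h11 : A ∘L adjoint A + B ∘L adjoint B = 1)
    (h12 : A ∘L adjoint C + B ∘L adjoint D = 0)
    (h21 : C ∘L adjoint A + D ∘L adjoint B = 0)
    (h22 : C ∘L adjoint C + D ∘L adjoint D = 1)
    (S : ℂ → (U →L[ℂ] Y))
    (hS : ∀ l : ℂ, ‖l‖ < 1 →
      S l = D + l • (C ∘L Ring.inverse (1 - l • A) ∘L B)) :
    ∀ l z : ℂ, ‖l‖ < 1 → ‖z‖ < 1 →
      (1 - l * (starRingEnd ℂ) z)⁻¹ • (1 - S l ∘L adjoint (S z)) =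
        C ∘L Ring.inverse (1 - l • A)
          ∘L Ring.inverse (1 - (starRingEnd ℂ) z • adjoint A) ∘L adjoint C := by
  -- ‖A‖ ≤ 1
  have hAle : ‖A‖ ≤ 1 := by
    rw [← LinearIsometryEquiv.norm_map adjoint A]
    refine opNorm_le_bound _ zero_le_one fun y => ?_
    rw [one_mul]
    have h1 : ‖adjoint A y‖ ^ 2 + ‖adjoint B y‖ ^ 2 = ‖y‖ ^ 2 := by
      have h := congrArg (fun T : X →L[ℂ] X => RCLike.re (inner ℂ (T y) y : ℂ)) h11
      simp only [add_apply, comp_apply, one_apply, inner_add_left] at h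
      rw [← adjoint_inner_right A, ← adjoint_inner_right B] at h
      simpa [inner_self_eq_norm_sq, map_add, ← Complex.ofReal_pow, Complex.ofReal_re] using h
    nlinarith [norm_nonneg (adjoint A y), norm_nonneg (adjoint B y), norm_nonneg y]
  have hAadjle : ‖adjoint A‖ ≤ 1 := by
    rw [LinearIsometryEquiv.norm_map adjoint A]; exact hAle
  intro l z hl hz
  set zc := (starRingEnd ℂ) z with hzc
  have hzcn : ‖zc‖ = ‖z‖ := by rw [hzc]; exact RCLike.norm_conj z
  have hlz : ‖l * zc‖ < 1 := by
    rw [norm_mul, hzcn]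
    calc ‖l‖ * ‖z‖ ≤ 1 * ‖z‖ := mul_le_mul_of_nonneg_right hl.le (norm_nonneg z)
      _ = ‖z‖ := one_mul _
      _ < 1 := hz
  have hne : (1 : ℂ) - l * zc ≠ 0 := by
    intro h
    rw [sub_eq_zero] at h
    rw [← h] at hlz
    simp at hlz
  -- units
  have hnF : ‖l • A‖ < 1 := by
    rw [norm_smul]
    calc ‖l‖ * ‖A‖ ≤ ‖l‖ * 1 := by
          exact mul_le_mul_of_nonneg_left hAle (norm_nonneg l)
      _ = ‖l‖ := mul_one _
      _ < 1 := hl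
  have hnFz : ‖z • A‖ < 1 := by
    rw [norm_smul]
    calc ‖z‖ * ‖A‖ ≤ ‖z‖ * 1 := mul_le_mul_of_nonneg_left hAle (norm_nonneg z)
      _ = ‖z‖ := mul_one _
      _ < 1 := hz
  have hnG : ‖zc • adjoint A‖ < 1 := by
    rw [norm_smul, hzcn]
    calc ‖z‖ * ‖adjoint A‖ ≤ ‖z‖ * 1 := mul_le_mul_of_nonneg_left hAadjle (norm_nonneg z)
      _ = ‖z‖ := mul_one _
      _ < 1 := hz
  have uF : IsUnit ((1 : X →L[ℂ] X) - l • A) := ⟨Units.oneSub _ hnF, rfl⟩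
  have uFz : IsUnit ((1 : X →L[ℂ] X) - z • A) := ⟨Units.oneSub _ hnFz, rfl⟩
  have uG : IsUnit ((1 : X →L[ℂ] X) - zc • adjoint A) := ⟨Units.oneSub _ hnG, rfl⟩
  set F := Ring.inverse ((1 : X →L[ℂ] X) - l • A) with hFdef
  set G := Ring.inverse ((1 : X →L[ℂ] X) - zc • adjoint A) with hGdef
  have hF2 : F * ((1 : X →L[ℂ] X) - l • A) = 1 := Ring.inverse_mul_cancel _ uF
  have hG1 : ((1 : X →L[ℂ] X) - zc • adjoint A) * G = 1 := Ring.mul_inverse_cancel _ uG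
  -- adjoint of the resolvent
  have hGadj : adjoint (Ring.inverse ((1 : X →L[ℂ] X) - z • A)) = G := by
    rw [hGdef, ← star_eq_adjoint, ← Ring.inverse_star]
    congr 1
    rw [star_sub, star_one, star_smul, star_eq_adjoint, hzc, starRingEnd_apply]
  -- adjoint of S z
  have hSz : adjoint (S z) = adjoint D + zc • (adjoint B ∘L (G ∘L adjoint C)) := by
    rw [hS z hz, map_add, LinearIsometryEquiv.map_smulₛₗ adjoint, adjoint_comp, adjoint_comp,
      hGadj]
    rfl
  -- block relations
  have hDD : D ∘L adjoint D = 1 - C ∘L adjoint C := eq_sub_of_add_eq' h22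
  have hBD : B ∘L adjoint D = -(A ∘L adjoint C) := eq_neg_of_add_eq_zero_right h12
  have hDB : D ∘L adjoint B = -(C ∘L adjoint A) := eq_neg_of_add_eq_zero_right h21
  have hBB : B ∘L adjoint B = 1 - A ∘L adjoint A := eq_sub_of_add_eq' h11
  -- resolvent identities
  have hF' : l • (F ∘L A) = F - 1 := by
    have h : F - l • (F ∘L A) = 1 := by
      rw [← hF2, mul_sub, mul_one, mul_smul_comm, mul_def]
    rw [← h]; abel
  have hG' : zc • (adjoint A ∘L G) = G - 1 := by
    have h : G - zc • (adjoint A ∘L G) = 1 := by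
      rw [← hG1, sub_mul, one_mul, smul_mul_assoc, mul_def]
    rw [← h]; abel
  have relF : ∀ T : Y →L[ℂ] X, l • (C ∘L (F ∘L (A ∘L T))) = C ∘L (F ∘L T) - C ∘L T := by
    intro T
    rw [← comp_assoc F A T, ← comp_smul, ← smul_comp, hF', sub_comp, one_def, id_comp, comp_sub]
  have relG : ∀ T : Y →L[ℂ] X, zc • (adjoint A ∘L (G ∘L T)) = G ∘L T - T := by
    intro T
    rw [← comp_assoc, ← smul_comp, hG', sub_comp, one_def, id_comp]
  -- the four expansion terms
  have hT2 : zc • (D ∘L (adjoint B ∘L (G ∘L adjoint C))) =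
      C ∘L adjoint C - C ∘L (G ∘L adjoint C) := by
    rw [← comp_assoc D (adjoint B) (G ∘L adjoint C), hDB, neg_comp,
      comp_assoc C (adjoint A) (G ∘L adjoint C), smul_neg, ← comp_smul, relG, comp_sub, neg_sub]
  have hT3 : l • ((C ∘L (F ∘L B)) ∘L adjoint D) = C ∘L adjoint C - C ∘L (F ∘L adjoint C) := by
    rw [comp_assoc C (F ∘L B) (adjoint D), comp_assoc F B (adjoint D), hBD, comp_neg, comp_neg,
      smul_neg, relF, neg_sub]
  have hT4 : (zc * l) • ((C ∘L (F ∘L B)) ∘L (adjoint B ∘L (G ∘L adjoint C))) =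
      (zc * l) • (C ∘L (F ∘L (G ∘L adjoint C)))
        - ((C ∘L (F ∘L (G ∘L adjoint C)) - C ∘L (G ∘L adjoint C))
            - (C ∘L (F ∘L adjoint C) - C ∘L adjoint C)) := by
    rw [comp_assoc C (F ∘L B) (adjoint B ∘L (G ∘L adjoint C)),
      comp_assoc F B (adjoint B ∘L (G ∘L adjoint C)),
      ← comp_assoc B (adjoint B) (G ∘L adjoint C), hBB, sub_comp, one_def, id_comp,
      comp_assoc A (adjoint A) (G ∘L adjoint C), comp_sub, comp_sub, smul_sub]
    have step : l • (C ∘L (F ∘L (A ∘L (zc • (adjoint A ∘L (G ∘L adjoint C)))))) =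
        (zc * l) • (C ∘L (F ∘L (A ∘L (adjoint A ∘L (G ∘L adjoint C))))) := by
      rw [comp_smul, comp_smul, comp_smul, smul_smul, mul_comm l zc]
    congr 1
    rw [← step, relG, comp_sub, comp_sub, comp_sub, smul_sub, relF, relF]
  -- the key identity
  have key : (1 : Y →L[ℂ] Y) - S l ∘L adjoint (S z) =
      (1 - l * zc) • (C ∘L (F ∘L (G ∘L adjoint C))) := by
    rw [hS l hl, hSz, ← hFdef]
    simp only [comp_add, add_comp, comp_smul, smul_comp, smul_add, smul_smul]
    rw [hDD, hT2, hT3, hT4, sub_smul, one_smul, mul_comm l zc]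
    abel
  rw [key, inv_smul_smul₀ hne]
end

section
/- Parrott's theorem: given Hilbert spaces H₁, H₂, K₁, K₂ and bounded operators T₁₁ : H₁ → K₁, T₁₂ : H₂ → K₁, T₂₂ : H₂ → K₂ such that ‖[T₁₁ T₁₂]‖ ≤ 1 and ‖[T₁₂; T₂₂]‖ ≤ 1, there exists X : H₁ → K₂ such that the block operator [[T₁₁, T₁₂], [X, T₂₂]] : H₁ ⊕ H₂ → K₁ ⊕ K₂ is a contraction. -/
open scoped InnerProductSpace
open ContinuousLinearMap Filter Topology

/-- Core step of Parrott's theorem: when `1 - B*B` is invertible, the explicit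
formula `X = -C (1 - B*B)⁻¹ B* A` fills the corner. -/
lemma parrott_core
    {H1 H2 K1 K2 : Type*}
    [NormedAddCommGroup H1] [InnerProductSpace ℂ H1] [CompleteSpace H1]
    [NormedAddCommGroup H2] [InnerProductSpace ℂ H2] [CompleteSpace H2]
    [NormedAddCommGroup K1] [InnerProductSpace ℂ K1] [CompleteSpace K1]
    [NormedAddCommGroup K2] [InnerProductSpace ℂ K2] [CompleteSpace K2]
    (A : H1 →L[ℂ] K1) (B : H2 →L[ℂ] K1) (C : H2 →L[ℂ] K2)
    (hrow : ∀ h1 h2, ‖A h1 + B h2‖^2 ≤ ‖h1‖^2 + ‖h2‖^2)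
    (hcol : ∀ h, ‖B h‖^2 + ‖C h‖^2 ≤ ‖h‖^2)
    (hB : ‖(ContinuousLinearMap.adjoint B) ∘L B‖ < 1) :
    ∃ X : H1 →L[ℂ] K2, ∀ h1 h2,
      ‖A h1 + B h2‖^2 + ‖X h1 + C h2‖^2 ≤ ‖h1‖^2 + ‖h2‖^2 := by
  set B' := ContinuousLinearMap.adjoint B with hB'
  set e : (H2 →L[ℂ] H2)ˣ := Units.oneSub (B' ∘L B) hB with he
  set P : H1 →L[ℂ] H2 := (↑e⁻¹ : H2 →L[ℂ] H2) ∘L (B' ∘L A) with hP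
  refine ⟨-(C ∘L P), fun h1 h2 => ?_⟩
  set k := A h1 with hk
  set q := P h1 with hqdef
  -- E q = B' k
  have hq : q - B' (B q) = B' k := by
    have h1' : (↑e : H2 →L[ℂ] H2) ((↑e⁻¹ : H2 →L[ℂ] H2) (B' k)) = B' k := by
      rw [← ContinuousLinearMap.mul_apply, e.mul_inv, ContinuousLinearMap.one_apply]
    have h2' : (↑e : H2 →L[ℂ] H2) q = q - B' (B q) := by
      have : (↑e : H2 →L[ℂ] H2) = 1 - (B' ∘L B) := rfl
      rw [this]; simp
    calc q - B' (B q) = (↑e : H2 →L[ℂ] H2) q := h2'.symm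
      _ = B' k := by
          rw [hqdef, hP]
          simpa [ContinuousLinearMap.mul_apply, ContinuousLinearMap.comp_apply] using h1'
  -- abbreviations for real parts
  have hadj : ∀ (y : H2), (⟪k, B y⟫_ℂ) = ⟪q, y⟫_ℂ - ⟪B q, B y⟫_ℂ := by
    intro y
    rw [← ContinuousLinearMap.adjoint_inner_left B y k, ← hB', ← hq]
    rw [inner_sub_left]
    congr 1
    exact ContinuousLinearMap.adjoint_inner_left B y (B q)
  have hs : RCLike.re (⟪k, B q⟫_ℂ) = ‖q‖^2 - ‖B q‖^2 := by
    rw [hadj q, map_sub, inner_self_eq_norm_sq, inner_self_eq_norm_sq]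
  -- key bound: ‖k‖² + s ≤ ‖h1‖²
  have hks : ‖k‖^2 + (‖q‖^2 - ‖B q‖^2) ≤ ‖h1‖^2 := by
    have h := hrow h1 q
    rw [norm_add_sq (𝕜 := ℂ) k (B q)] at h
    rw [hs] at h
    linarith
  -- the second block entry
  have hX : (-(C ∘L P)) h1 + C h2 = C (h2 - q) := by
    simp [hqdef, map_sub, sub_eq_add_neg, add_comm]
  rw [hX]
  have hcu := hcol (h2 - q)
  have e1 : ‖k + B h2‖^2 = ‖k‖^2 + 2 * RCLike.re (⟪k, B h2⟫_ℂ) + ‖B h2‖^2 :=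
    norm_add_sq (𝕜 := ℂ) k (B h2)
  have e2 : ‖h2 - q‖^2 = ‖h2‖^2 - 2 * RCLike.re (⟪h2, q⟫_ℂ) + ‖q‖^2 :=
    norm_sub_sq (𝕜 := ℂ) h2 q
  have e3 : ‖B h2 - B q‖^2 = ‖B h2‖^2 - 2 * RCLike.re (⟪B h2, B q⟫_ℂ) + ‖B q‖^2 :=
    norm_sub_sq (𝕜 := ℂ) (B h2) (B q)
  have e4 : ‖B (h2 - q)‖^2 = ‖B h2 - B q‖^2 := by rw [map_sub]
  have e5 : RCLike.re (⟪k, B h2⟫_ℂ) = RCLike.re (⟪h2, q⟫_ℂ) - RCLike.re (⟪B h2, B q⟫_ℂ) := by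
    rw [hadj h2, map_sub, inner_re_symm q h2, inner_re_symm (B q) (B h2)]
  calc ‖A h1 + B h2‖^2 + ‖C (h2 - q)‖^2
      ≤ ‖k + B h2‖^2 + (‖h2 - q‖^2 - ‖B (h2 - q)‖^2) := by rw [← hk]; linarith
    _ = ‖k‖^2 + ‖h2‖^2 + (‖q‖^2 - ‖B q‖^2) := by rw [e1, e2, e4, e3]; linarith [e5]
    _ ≤ ‖h1‖^2 + ‖h2‖^2 := by linarith

/-- Parrott's theorem: if the row `[T₁₁ T₁₂] : H₁ ⊕ H₂ → K₁` and the column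
`[T₁₂; T₂₂] : H₂ → K₁ ⊕ K₂` are contractions, then there exists `X : H₁ → K₂`
such that the block operator `[[T₁₁, T₁₂], [X, T₂₂]] : H₁ ⊕ H₂ → K₁ ⊕ K₂`
is a contraction. -/
theorem stmt4
    {H1 H2 K1 K2 : Type*}
    [NormedAddCommGroup H1] [InnerProductSpace ℂ H1] [CompleteSpace H1]
    [NormedAddCommGroup H2] [InnerProductSpace ℂ H2] [CompleteSpace H2]
    [NormedAddCommGroup K1] [InnerProductSpace ℂ K1] [CompleteSpace K1]
    [NormedAddCommGroup K2] [InnerProductSpace ℂ K2] [CompleteSpace K2]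
    (T11 : H1 →L[ℂ] K1) (T12 : H2 →L[ℂ] K1) (T22 : H2 →L[ℂ] K2)
    (hrow : ∀ (h1 : H1) (h2 : H2), ‖T11 h1 + T12 h2‖ ^ 2 ≤ ‖h1‖ ^ 2 + ‖h2‖ ^ 2)
    (hcol : ∀ h : H2, ‖T12 h‖ ^ 2 + ‖T22 h‖ ^ 2 ≤ ‖h‖ ^ 2) :
    ∃ X : H1 →L[ℂ] K2, ∀ (h1 : H1) (h2 : H2),
      ‖T11 h1 + T12 h2‖ ^ 2 + ‖X h1 + T22 h2‖ ^ 2 ≤ ‖h1‖ ^ 2 + ‖h2‖ ^ 2 := by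
  classical
  set r : ℕ → ℝ := fun n => 1 - 1/(n+1) with hrdef
  have hr0 : ∀ n, 0 ≤ r n := by
    intro n
    have h1 : (1:ℝ)/(n+1) ≤ 1 := by
      rw [div_le_one (by positivity)]
      simp
    simp only [hrdef]; linarith
  have hr1 : ∀ n, r n < 1 := by
    intro n
    have : (0:ℝ) < 1/(n+1) := by positivity
    simp only [hrdef]; linarith
  have hrlim : Tendsto r atTop (𝓝 1) := by
    have h := tendsto_one_div_add_atTop_nhds_zero_nat (𝕜 := ℝ)
    have := (tendsto_const_nhds (x := (1:ℝ)) (f := atTop)).sub h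
    simpa [hrdef] using this
  have hT12 : ‖T12‖ ≤ 1 := by
    refine ContinuousLinearMap.opNorm_le_bound _ zero_le_one fun h => ?_
    rw [one_mul]
    have hc := hcol h
    have h1 : ‖T12 h‖^2 ≤ ‖h‖^2 := by nlinarith [sq_nonneg ‖T22 h‖]
    exact (pow_le_pow_iff_left₀ (norm_nonneg _) (norm_nonneg _) two_ne_zero).mp h1
  -- the strict-contraction approximants
  have hcore : ∀ n : ℕ, ∃ X : H1 →L[ℂ] K2, ∀ (h1 : H1) (h2 : H2),
      ‖(((r n : ℝ) : ℂ) • T11) h1 + (((r n : ℝ) : ℂ) • T12) h2‖ ^ 2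
        + ‖X h1 + (((r n : ℝ) : ℂ) • T22) h2‖ ^ 2 ≤ ‖h1‖ ^ 2 + ‖h2‖ ^ 2 := by
    intro n
    have hnr : ‖((r n : ℝ) : ℂ)‖ = r n := by
      rw [Complex.norm_real, Real.norm_eq_abs, abs_of_nonneg (hr0 n)]
    refine parrott_core _ _ _ ?_ ?_ ?_
    · intro h1 h2
      have e1 : (((r n : ℝ) : ℂ) • T11) h1 + (((r n : ℝ) : ℂ) • T12) h2
          = ((r n : ℝ) : ℂ) • (T11 h1 + T12 h2) := by
        simp [smul_add]
      rw [e1, norm_smul, hnr, mul_pow]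
      have hh := hrow h1 h2
      have hr2 : (r n)^2 ≤ 1 := by nlinarith [hr0 n, hr1 n]
      calc (r n)^2 * ‖T11 h1 + T12 h2‖^2 ≤ 1 * ‖T11 h1 + T12 h2‖^2 :=
            mul_le_mul_of_nonneg_right hr2 (sq_nonneg _)
        _ = ‖T11 h1 + T12 h2‖^2 := one_mul _
        _ ≤ ‖h1‖^2 + ‖h2‖^2 := hh
    · intro h
      have e1 : ‖(((r n : ℝ) : ℂ) • T12) h‖ = r n * ‖T12 h‖ := by
        rw [ContinuousLinearMap.smul_apply, norm_smul, hnr]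
      have e2 : ‖(((r n : ℝ) : ℂ) • T22) h‖ = r n * ‖T22 h‖ := by
        rw [ContinuousLinearMap.smul_apply, norm_smul, hnr]
      rw [e1, e2, mul_pow, mul_pow]
      have hh := hcol h
      have hr2 : (r n)^2 ≤ 1 := by nlinarith [hr0 n, hr1 n]
      calc (r n)^2 * ‖T12 h‖^2 + (r n)^2 * ‖T22 h‖^2
          = (r n)^2 * (‖T12 h‖^2 + ‖T22 h‖^2) := by ring
        _ ≤ 1 * ‖h‖^2 := by
            refine mul_le_mul hr2 hh (by positivity) zero_le_one
        _ = ‖h‖^2 := one_mul _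
    · have hc : ‖ContinuousLinearMap.adjoint (((r n : ℝ) : ℂ) • T12) ∘L (((r n : ℝ) : ℂ) • T12)‖
          = ‖(((r n : ℝ) : ℂ) • T12)‖ * ‖(((r n : ℝ) : ℂ) • T12)‖ :=
        ContinuousLinearMap.norm_adjoint_comp_self _
      rw [hc, norm_smul ((r n : ℝ) : ℂ) T12, hnr]
      have h0 := hr0 n; have h1 := hr1 n
      have hT := norm_nonneg T12
      have hb : r n * ‖T12‖ ≤ r n := mul_le_of_le_one_right h0 hT12
      have hb0 : 0 ≤ r n * ‖T12‖ := mul_nonneg h0 hT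
      nlinarith [mul_le_mul hb hb hb0 h0]
  choose Xn hXn using hcore
  have hXle : ∀ n h, ‖Xn n h‖ ≤ ‖h‖ := by
    intro n h
    have h0 := hXn n h 0
    simp only [map_zero, add_zero, norm_zero] at h0
    have h1 : ‖Xn n h‖^2 ≤ ‖h‖^2 := by
      nlinarith [sq_nonneg ‖(((r n : ℝ) : ℂ) • T11) h‖]
    exact (pow_le_pow_iff_left₀ (norm_nonneg _) (norm_nonneg _) two_ne_zero).mp h1
  set 𝒰 : Ultrafilter ℕ := Ultrafilter.of atTop with h𝒰def
  have h𝒰 : (𝒰 : Filter ℕ) ≤ atTop := Ultrafilter.of_le atTop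
  -- ultrafilter limits of inner products
  have hex : ∀ (h1 : H1) (k : K2), ∃ L : ℂ,
      Tendsto (fun n => ⟪Xn n h1, k⟫_ℂ) (𝒰 : Filter ℕ) (𝓝 L) := by
    intro h1 k
    have hmem : ∀ n, ⟪Xn n h1, k⟫_ℂ ∈ Metric.closedBall (0:ℂ) (‖h1‖ * ‖k‖) := by
      intro n
      rw [Metric.mem_closedBall, dist_zero_right]
      exact (norm_inner_le_norm _ _).trans
        (mul_le_mul_of_nonneg_right (hXle n h1) (norm_nonneg k))
    obtain ⟨L, -, hL⟩ := (isCompact_closedBall (0:ℂ) (‖h1‖ * ‖k‖)).ultrafilter_le_nhds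
      (𝒰.map (fun n => ⟪Xn n h1, k⟫_ℂ))
      (by rw [Ultrafilter.coe_map, Filter.le_principal_iff]
          exact Filter.mem_map.mpr (Filter.univ_mem' hmem))
    exact ⟨L, by rwa [Ultrafilter.coe_map] at hL⟩
  choose L hL using hex
  have hLbound : ∀ h1 k, ‖L h1 k‖ ≤ ‖h1‖ * ‖k‖ := by
    intro h1 k
    refine le_of_tendsto (hL h1 k).norm (Filter.Eventually.of_forall fun n => ?_)
    exact (norm_inner_le_norm _ _).trans
      (mul_le_mul_of_nonneg_right (hXle n h1) (norm_nonneg k))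
  -- represent the limits by vectors
  have hmk : ∀ h1 : H1, ∃ y : K2, (∀ k, ⟪y, k⟫_ℂ = L h1 k) ∧ ‖y‖ ≤ ‖h1‖ := by
    intro h1
    have hadd : ∀ k k', L h1 (k + k') = L h1 k + L h1 k' := by
      intro k k'
      refine tendsto_nhds_unique (hL h1 (k + k')) ?_
      simpa [inner_add_right] using (hL h1 k).add (hL h1 k')
    have hsmul : ∀ (c : ℂ) (k : K2), L h1 (c • k) = c * L h1 k := by
      intro c k
      refine tendsto_nhds_unique (hL h1 (c • k)) ?_
      simpa [inner_smul_right] using (hL h1 k).const_mul c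
    set F : K2 →L[ℂ] ℂ := LinearMap.mkContinuous
      { toFun := L h1, map_add' := hadd, map_smul' := fun c k => hsmul c k }
      ‖h1‖ (fun k => hLbound h1 k) with hF
    refine ⟨(InnerProductSpace.toDual ℂ K2).symm F, fun k => ?_, ?_⟩
    · rw [← InnerProductSpace.toDual_apply_apply]
      simp [hF, LinearMap.mkContinuous_apply]
    · calc ‖(InnerProductSpace.toDual ℂ K2).symm F‖ = ‖F‖ :=
            (InnerProductSpace.toDual ℂ K2).symm.norm_map F
        _ ≤ ‖h1‖ := LinearMap.mkContinuous_norm_le _ (norm_nonneg h1) _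
  choose Y hY hYnorm using hmk
  have hYadd : ∀ a b : H1, Y (a + b) = Y a + Y b := by
    intro a b
    refine ext_inner_right ℂ fun k => ?_
    rw [hY, inner_add_left, hY, hY]
    refine tendsto_nhds_unique (hL (a + b) k) ?_
    simpa [map_add, inner_add_left] using (hL a k).add (hL b k)
  have hYsmul : ∀ (c : ℂ) (a : H1), Y (c • a) = c • Y a := by
    intro c a
    refine ext_inner_right ℂ fun k => ?_
    rw [hY, inner_smul_left, hY]
    refine tendsto_nhds_unique (hL (c • a) k) ?_
    refine ((hL a k).const_mul (starRingEnd ℂ c)).congr fun n => ?_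
    rw [map_smul, inner_smul_left]
  set X : H1 →L[ℂ] K2 := LinearMap.mkContinuous
    { toFun := Y, map_add' := hYadd, map_smul' := fun c a => hYsmul c a } 1
    (fun a => by simpa using hYnorm a) with hXdef
  refine ⟨X, fun h1 h2 => ?_⟩
  have hXh : X h1 = Y h1 := rfl
  rw [hXh]
  set w := Y h1 + T22 h2 with hw
  set m := ‖T11 h1 + T12 h2‖ with hm
  set S := ‖h1‖^2 + ‖h2‖^2 with hS
  have hSm : m^2 ≤ S := hrow h1 h2
  have hvb : ∀ n, ‖Xn n h1 + ((r n : ℝ) : ℂ) • T22 h2‖^2 ≤ S - (r n)^2 * m^2 := by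
    intro n
    have h := hXn n h1 h2
    have hnr : ‖((r n : ℝ) : ℂ)‖ = r n := by
      rw [Complex.norm_real, Real.norm_eq_abs, abs_of_nonneg (hr0 n)]
    have e1 : (((r n : ℝ) : ℂ) • T11) h1 + (((r n : ℝ) : ℂ) • T12) h2
        = ((r n : ℝ) : ℂ) • (T11 h1 + T12 h2) := by simp [smul_add]
    have e2 : ‖((r n : ℝ) : ℂ) • (T11 h1 + T12 h2)‖^2 = (r n)^2 * m^2 := by
      rw [norm_smul, hnr, mul_pow, hm]
    have e3 : (((r n : ℝ) : ℂ) • T22) h2 = ((r n : ℝ) : ℂ) • T22 h2 :=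
      ContinuousLinearMap.smul_apply _ _ _
    rw [e1, e2, e3] at h
    rw [hS]
    linarith
  have hretend : Tendsto (fun n => RCLike.re ⟪w, Xn n h1 + ((r n : ℝ) : ℂ) • T22 h2⟫_ℂ)
      (𝒰 : Filter ℕ) (𝓝 (‖w‖^2)) := by
    have t1 : Tendsto (fun n => ⟪w, Xn n h1⟫_ℂ) (𝒰 : Filter ℕ) (𝓝 ⟪w, Y h1⟫_ℂ) := by
      have hst := (hL h1 w).star
      rw [← hY h1 w] at hst
      simp only [RCLike.star_def, inner_conj_symm] at hst
      exact hst
    have t2 : Tendsto (fun n => ((r n : ℝ) : ℂ)) (𝒰 : Filter ℕ) (𝓝 1) := by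
      have := (Complex.continuous_ofReal.tendsto 1).comp (hrlim.mono_left h𝒰)
      simpa [Function.comp_def] using this
    have t3 : Tendsto (fun n => ⟪w, Xn n h1 + ((r n : ℝ) : ℂ) • T22 h2⟫_ℂ)
        (𝒰 : Filter ℕ) (𝓝 (⟪w, Y h1⟫_ℂ + ⟪w, T22 h2⟫_ℂ)) := by
      have htt := t1.add (t2.mul (tendsto_const_nhds (x := ⟪w, T22 h2⟫_ℂ)))
      rw [one_mul] at htt
      refine htt.congr fun n => ?_
      rw [inner_add_right, inner_smul_right]
    have hww : ⟪w, Y h1⟫_ℂ + ⟪w, T22 h2⟫_ℂ = ⟪w, w⟫_ℂ := by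
      rw [hw, inner_add_right]
    rw [hww] at t3
    have := (RCLike.continuous_re.tendsto _).comp t3
    rw [inner_self_eq_norm_sq] at this
    simpa [Function.comp_def] using this
  have hrhs : Tendsto (fun n => ‖w‖ * Real.sqrt (S - (r n)^2 * m^2))
      (𝒰 : Filter ℕ) (𝓝 (‖w‖ * Real.sqrt (S - m^2))) := by
    have tr : Tendsto (fun n => S - (r n)^2 * m^2) (𝒰 : Filter ℕ) (𝓝 (S - 1^2 * m^2)) :=
      tendsto_const_nhds.sub (((hrlim.mono_left h𝒰).pow 2).mul tendsto_const_nhds)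
    have := (Real.continuous_sqrt.tendsto _).comp tr
    simpa using tendsto_const_nhds.mul this
  have hle' : ∀ n, RCLike.re ⟪w, Xn n h1 + ((r n : ℝ) : ℂ) • T22 h2⟫_ℂ
      ≤ ‖w‖ * Real.sqrt (S - (r n)^2 * m^2) := by
    intro n
    set v := Xn n h1 + ((r n : ℝ) : ℂ) • T22 h2 with hv
    have ha : RCLike.re ⟪w, v⟫_ℂ ≤ ‖w‖ * ‖v‖ :=
      (RCLike.re_le_norm _).trans (norm_inner_le_norm w v)
    have hb : ‖v‖ ≤ Real.sqrt (S - (r n)^2 * m^2) := by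
      rw [← Real.sqrt_sq (norm_nonneg v)]
      exact Real.sqrt_le_sqrt (hvb n)
    exact ha.trans (mul_le_mul_of_nonneg_left hb (norm_nonneg w))
  have key : ‖w‖^2 ≤ ‖w‖ * Real.sqrt (S - m^2) :=
    le_of_tendsto_of_tendsto' hretend hrhs hle'
  have hSm0 : 0 ≤ S - m^2 := by linarith
  have hwle : ‖w‖^2 ≤ S - m^2 := by
    rcases eq_or_lt_of_le (norm_nonneg w) with hz | hz
    · rw [← hz]; simpa using hSm0
    · have hwle1 : ‖w‖ ≤ Real.sqrt (S - m^2) := by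
        have : ‖w‖ * ‖w‖ ≤ ‖w‖ * Real.sqrt (S - m^2) := by
          rw [← sq]; exact key
        exact le_of_mul_le_mul_left this hz
      calc ‖w‖^2 ≤ (Real.sqrt (S - m^2))^2 :=
            pow_le_pow_left₀ (norm_nonneg w) hwle1 2
        _ = S - m^2 := Real.sq_sqrt hSm0
  linarith
end

section
/- Suppose [T₁₁ T₁₂] : H₁ ⊕ H₂ → K₁ is a contraction and [T₁₂; T₂₂] : H₂ → K₁ ⊕ K₂ is an isometry. If y ∈ H₂ satisfies T₂₂ y = 0, then T₁₁* T₁₂ y = 0. -/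
open ContinuousLinearMap in
/-- If the row `[T₁₁ T₁₂]` is a contraction and the column `[T₁₂; T₂₂]` is an
isometry, then `T₂₂ y = 0` implies `T₁₁* T₁₂ y = 0`. -/
theorem stmt7
    {H1 H2 K1 K2 : Type*}
    [NormedAddCommGroup H1] [InnerProductSpace ℂ H1] [CompleteSpace H1]
    [NormedAddCommGroup H2] [InnerProductSpace ℂ H2] [CompleteSpace H2]
    [NormedAddCommGroup K1] [InnerProductSpace ℂ K1] [CompleteSpace K1]
    [NormedAddCommGroup K2] [InnerProductSpace ℂ K2] [CompleteSpace K2]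
    (T11 : H1 →L[ℂ] K1) (T12 : H2 →L[ℂ] K1) (T22 : H2 →L[ℂ] K2)
    (hrow : ∀ (h1 : H1) (h2 : H2), ‖T11 h1 + T12 h2‖ ^ 2 ≤ ‖h1‖ ^ 2 + ‖h2‖ ^ 2)
    (hcol : ∀ h : H2, ‖T12 h‖ ^ 2 + ‖T22 h‖ ^ 2 = ‖h‖ ^ 2)
    (y : H2) (hy : T22 y = 0) :
    adjoint T11 (T12 y) = 0 := by
  set x := adjoint T11 (T12 y) with hx
  have hT12y : ‖T12 y‖ ^ 2 = ‖y‖ ^ 2 := by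
    have := hcol y
    rw [hy, norm_zero] at this
    simpa using this
  have hre : Complex.re (inner ℂ (T11 x) (T12 y) : ℂ) = ‖x‖ ^ 2 := by
    have h1 : (inner ℂ (T11 x) (T12 y) : ℂ) = inner ℂ x x := by
      rw [← ContinuousLinearMap.adjoint_inner_right T11, ← hx]
    rw [h1, inner_self_eq_norm_sq_to_K]
    norm_cast
  have hexp : ‖T11 x + T12 y‖ ^ 2
      = ‖T11 x‖ ^ 2 + 2 * Complex.re (inner ℂ (T11 x) (T12 y) : ℂ) + ‖T12 y‖ ^ 2 := by
    exact norm_add_sq (𝕜 := ℂ) (T11 x) (T12 y)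
  have hineq := hrow x y
  rw [hexp, hre, hT12y] at hineq
  have hnorm : ‖x‖ ^ 2 ≤ 0 := by nlinarith [sq_nonneg ‖T11 x‖]
  have : ‖x‖ = 0 := by nlinarith [norm_nonneg x]
  exact norm_eq_zero.mp this
end

section
/- Let (C, A) be an output-stable pair with observability operator O_{C,A} : X → H_Y(k_d), O_{C,A} x = C(I - λ₁A₁ - ⋯ - λ_dA_d)⁻¹x. Then the reproducing kernel Hilbert space H(K_{C,A}) with kernel K_{C,A}(λ,ζ) = C(I - Z(λ)A)⁻¹(I - A*Z(ζ)*)⁻¹C* equals Ran O_{C,A}, with ‖O_{C,A} x‖_{H(K_{C,A})} = ‖Qx‖_X where Q is the orthogonal projection onto (Ker O_{C,A})^⊥; in particular O_{C,A} : X → H(K_{C,A}) is an isometry if and only if (C,A) is observable. -/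
/-!
The reproducing property shows that the kernel functions `K(·, ζ) v` of `H(K_{C,A})` have
the same Gram matrix as the vectors `O(ζ)* v` of `X`, where `O(ζ) x = C (I - Z(ζ) A)⁻¹ x`.
Since the kernel functions span a dense subspace, `K(·, ζ) v ↦ O(ζ)* v` extends to an isometry
`S : H(K_{C,A}) → X`, and `S*` is the observability operator with values in `H(K_{C,A})`,
since `⟪K(·, ζ) v, S* x⟫ = ⟪O(ζ)* v, x⟫ = ⟪v, O(ζ) x⟫`. As the adjoint of an isometry, `S*`
is a coisometry: it is onto and isometric on `(Ker S*)ᗮ`.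
-/

open ContinuousLinearMap
open scoped InnerProductSpace

/-- An (abstract) realization of the reproducing kernel Hilbert space of an
`L(V)`-valued positive kernel `k` on `Ω`. -/
structure RKHS' (Ω : Type*) (V : Type*) [NormedAddCommGroup V] [InnerProductSpace ℂ V]
    (k : Ω → Ω → V →L[ℂ] V)
    (H : Type*) [NormedAddCommGroup H] [InnerProductSpace ℂ H] where
  toFun : H →ₗ[ℂ] (Ω → V)
  kElem : Ω → V → H
  kElem_apply : ∀ (ζ : Ω) (v : V) (l : Ω), toFun (kElem ζ v) l = k l ζ v
  reproducing : ∀ (f : H) (ζ : Ω) (v : V),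
    (inner ℂ (kElem ζ v) f : ℂ) = inner ℂ v (toFun f ζ)
  dense_span :
    (Submodule.span ℂ (Set.range fun p : Ω × V => kElem p.1 p.2)).topologicalClosure = ⊤

section GramMatrix

open Finsupp

variable {𝕜 ι H X : Type*} [RCLike 𝕜]
  [NormedAddCommGroup H] [InnerProductSpace 𝕜 H]
  [NormedAddCommGroup X] [InnerProductSpace 𝕜 X]
  {g : ι → H} {t : ι → X}

theorem norm_linearCombination_eq_of_inner_eq
    (hgt : ∀ i j, ⟪g i, g j⟫_𝕜 = ⟪t i, t j⟫_𝕜) (c : ι →₀ 𝕜) :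
    ‖linearCombination 𝕜 t c‖ = ‖linearCombination 𝕜 g c‖ := by
  have h : ⟪linearCombination 𝕜 t c, linearCombination 𝕜 t c⟫_𝕜 =
      ⟪linearCombination 𝕜 g c, linearCombination 𝕜 g c⟫_𝕜 := by
    simp only [linearCombination_apply, Finsupp.sum, sum_inner, inner_sum,
      inner_smul_left, inner_smul_right, hgt]
  rw [norm_eq_sqrt_re_inner (𝕜 := 𝕜), norm_eq_sqrt_re_inner (𝕜 := 𝕜), h]

theorem exists_linearIsometry_apply_eq_of_inner_eq [CompleteSpace X]
    (hgt : ∀ i j, ⟪g i, g j⟫_𝕜 = ⟪t i, t j⟫_𝕜)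
    (hg : (Submodule.span 𝕜 (Set.range g)).topologicalClosure = ⊤) :
    ∃ S : H →ₗᵢ[𝕜] X, ∀ i, S (g i) = t i := by
  have h_dense : DenseRange (linearCombination 𝕜 g) := by
    rw [DenseRange, ← LinearMap.coe_range, range_linearCombination]
    exact Submodule.dense_iff_topologicalClosure_eq_top.mpr hg
  have h_norm : ∃ K, ∀ c, ‖linearCombination 𝕜 t c‖ ≤ K * ‖linearCombination 𝕜 g c‖ :=
    ⟨1, fun c => by rw [one_mul, norm_linearCombination_eq_of_inner_eq hgt]⟩
  set S := (linearCombination 𝕜 t).extendOfNorm (linearCombination 𝕜 g)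
  have hS : ∀ c, S (linearCombination 𝕜 g c) = linearCombination 𝕜 t c :=
    LinearMap.extendOfNorm_eq h_dense h_norm
  have hS_norm (h : H) : ‖S h‖ = ‖h‖ :=
    h_dense.induction_on h (isClosed_eq (by fun_prop) continuous_norm) fun c => by
      rw [hS, norm_linearCombination_eq_of_inner_eq hgt]
  exact ⟨⟨S.toLinearMap, hS_norm⟩, fun i => by simpa using hS (single i 1)⟩

end GramMatrix

namespace LinearIsometry

variable {𝕜 H X : Type*} [RCLike 𝕜]
  [NormedAddCommGroup H] [InnerProductSpace 𝕜 H] [CompleteSpace H]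
  [NormedAddCommGroup X] [InnerProductSpace 𝕜 X] [CompleteSpace X]
  (S : H →ₗᵢ[𝕜] X)

theorem adjoint_apply_apply (h : H) : adjoint S.toContinuousLinearMap (S h) = h :=
  congr($(S.adjoint_comp_self) h)

theorem adjoint_surjective : Function.Surjective (adjoint S.toContinuousLinearMap) :=
  fun h => ⟨S h, S.adjoint_apply_apply h⟩

theorem norm_adjoint_apply_of_mem_orthogonal_ker {p : X}
    (hp : p ∈ (LinearMap.ker (adjoint S.toContinuousLinearMap : X →ₗ[𝕜] H))ᗮ) :
    ‖adjoint S.toContinuousLinearMap p‖ = ‖p‖ := by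
  set T := adjoint S.toContinuousLinearMap
  have hTS : ∀ h, T (S h) = h := S.adjoint_apply_apply
  have h_ker : p - S (T p) ∈ LinearMap.ker (T : X →ₗ[𝕜] H) := by
    simp only [LinearMap.mem_ker, ContinuousLinearMap.coe_coe, map_sub, hTS, sub_self]
  have h_inner : ⟪T p, T p⟫_𝕜 = ⟪p, p⟫_𝕜 := by
    have h_orth := hp _ h_ker
    rw [inner_sub_left, sub_eq_zero] at h_orth
    rw [← ContinuousLinearMap.adjoint_inner_left, ContinuousLinearMap.adjoint_adjoint]
    exact h_orth.symm
  rw [norm_eq_sqrt_re_inner (𝕜 := 𝕜), norm_eq_sqrt_re_inner (𝕜 := 𝕜), h_inner]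

theorem forall_norm_adjoint_apply_eq_iff_injective :
    (∀ x, ‖adjoint S.toContinuousLinearMap x‖ = ‖x‖) ↔
      Function.Injective (adjoint S.toContinuousLinearMap) := by
  refine ⟨fun h_iso => ?_, fun h_inj x => S.norm_adjoint_apply_of_mem_orthogonal_ker ?_⟩
  · exact (AddMonoidHomClass.isometry_of_norm _ h_iso).injective
  · rw [LinearMap.ker_eq_bot.mpr h_inj, Submodule.bot_orthogonal_eq_top]
    exact Submodule.mem_top

end LinearIsometry

namespace RKHS'

variable {Ω X Y H : Type*}
  [NormedAddCommGroup X] [InnerProductSpace ℂ X] [CompleteSpace X]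
  [NormedAddCommGroup Y] [InnerProductSpace ℂ Y] [CompleteSpace Y]
  [NormedAddCommGroup H] [InnerProductSpace ℂ H]
  {O : Ω → X →L[ℂ] Y} (r : RKHS' Ω Y (fun l z => O l ∘L adjoint (O z)) H)

theorem inner_kElem_kElem (ζ ζ' : Ω) (v v' : Y) :
    ⟪r.kElem ζ v, r.kElem ζ' v'⟫_ℂ = ⟪adjoint (O ζ) v, adjoint (O ζ') v'⟫_ℂ := by
  rw [r.reproducing, r.kElem_apply, comp_apply, adjoint_inner_left]

theorem exists_linearIsometry_kElem_eq :
    ∃ S : H →ₗᵢ[ℂ] X, ∀ ζ v, S (r.kElem ζ v) = adjoint (O ζ) v :=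
  (exists_linearIsometry_apply_eq_of_inner_eq (t := fun p : Ω × Y => adjoint (O p.1) p.2)
    (fun p q => r.inner_kElem_kElem p.1 q.1 p.2 q.2) r.dense_span).imp fun _ hS ζ v => hS (ζ, v)

theorem toFun_adjoint_apply [CompleteSpace H] {S : H →ₗᵢ[ℂ] X}
    (hS : ∀ ζ v, S (r.kElem ζ v) = adjoint (O ζ) v) (x : X) (l : Ω) :
    r.toFun (adjoint S.toContinuousLinearMap x) l = O l x :=
  ext_inner_left ℂ fun v => by
    rw [← r.reproducing, adjoint_inner_right, LinearIsometry.coe_toContinuousLinearMap, hS,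
      adjoint_inner_left]

end RKHS'

theorem stmt12_general {d : ℕ}
    {X Y : Type*}
    [NormedAddCommGroup X] [InnerProductSpace ℂ X] [CompleteSpace X]
    [NormedAddCommGroup Y] [InnerProductSpace ℂ Y] [CompleteSpace Y]
    (A : Fin d → X →L[ℂ] X) (C : X →L[ℂ] Y)
    {H : Type*} [NormedAddCommGroup H] [InnerProductSpace ℂ H] [CompleteSpace H]
    (r : RKHS' {l : EuclideanSpace ℂ (Fin d) // ‖l‖ < 1} Y
      (fun l z =>
        (C ∘L Ring.inverse (1 - ∑ j, l.1 j • A j)) ∘L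
          adjoint (C ∘L Ring.inverse (1 - ∑ j, z.1 j • A j))) H) :
    ∃ Ohat : X →L[ℂ] H,
      (∀ (x : X) (l : {l : EuclideanSpace ℂ (Fin d) // ‖l‖ < 1}),
        r.toFun (Ohat x) l = C (Ring.inverse (1 - ∑ j, l.1 j • A j) x)) ∧
      Function.Surjective Ohat ∧
      (∀ (x p : X), p ∈ (LinearMap.ker (Ohat : X →ₗ[ℂ] H))ᗮ → x - p ∈ LinearMap.ker (Ohat : X →ₗ[ℂ] H) →
        ‖Ohat x‖ = ‖p‖) ∧
      ((∀ x : X, ‖Ohat x‖ = ‖x‖) ↔ Function.Injective Ohat) := by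
  obtain ⟨S, hS⟩ := r.exists_linearIsometry_kElem_eq
  refine ⟨adjoint S.toContinuousLinearMap, r.toFun_adjoint_apply hS, S.adjoint_surjective,
    fun x p hp hxp => ?_, S.forall_norm_adjoint_apply_eq_iff_injective⟩
  have h_ker : adjoint S.toContinuousLinearMap (x - p) = 0 := hxp
  rw [← sub_add_cancel x p, map_add, h_ker, zero_add,
    S.norm_adjoint_apply_of_mem_orthogonal_ker hp]

/-- For a contractive (hence output-stable) pair `(C, A)`, the RKHS `H(K_{C,A})`
of the kernel `K_{C,A}(λ,ζ) = C(I-Z(λ)A)⁻¹(I-A*Z(ζ)*)⁻¹C*` on the unit ball is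
the range of the observability operator `O_{C,A} : x ↦ C(I - ∑ λⱼAⱼ)⁻¹x`, with
`‖O_{C,A}x‖ = ‖Qx‖` where `Q` is the orthogonal projection onto
`(Ker O_{C,A})ᗮ`; in particular `O_{C,A} : X → H(K_{C,A})` is an isometry iff
`(C,A)` is observable (i.e. `O_{C,A}` is injective). -/
theorem stmt12 {d : ℕ}
    {X Y : Type*}
    [NormedAddCommGroup X] [InnerProductSpace ℂ X] [CompleteSpace X]
    [NormedAddCommGroup Y] [InnerProductSpace ℂ Y] [CompleteSpace Y]
    (A : Fin d → X →L[ℂ] X) (C : X →L[ℂ] Y)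
    (hc : ((1 : X →L[ℂ] X) -
      ((∑ j, adjoint (A j) ∘L A j) + adjoint C ∘L C)).IsPositive)
    {H : Type*} [NormedAddCommGroup H] [InnerProductSpace ℂ H] [CompleteSpace H]
    (r : RKHS' {l : EuclideanSpace ℂ (Fin d) // ‖l‖ < 1} Y
      (fun l z =>
        (C ∘L Ring.inverse (1 - ∑ j, l.1 j • A j)) ∘L
          adjoint (C ∘L Ring.inverse (1 - ∑ j, z.1 j • A j))) H) :
    ∃ Ohat : X →L[ℂ] H,
      (∀ (x : X) (l : {l : EuclideanSpace ℂ (Fin d) // ‖l‖ < 1}),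
        r.toFun (Ohat x) l = C (Ring.inverse (1 - ∑ j, l.1 j • A j) x)) ∧
      Function.Surjective Ohat ∧
      (∀ (x p : X), p ∈ (LinearMap.ker (Ohat : X →ₗ[ℂ] H))ᗮ → x - p ∈ LinearMap.ker (Ohat : X →ₗ[ℂ] H) →
        ‖Ohat x‖ = ‖p‖) ∧
      ((∀ x : X, ‖Ohat x‖ = ‖x‖) ↔ Function.Injective Ohat) :=
  stmt12_general A C r
end

section
/- Let S be in the Schur class S_d(U,Y) (i.e., K_S(λ,ζ) = (I - S(λ)S(ζ)*)/(1-⟨λ,ζ⟩) is positive on 𝔹ᵈ), and suppose A₁,…,A_d are bounded operators on H(K_S) solving the Gleason problem: f(λ) - f(0) = Σⱼ λⱼ (Aⱼf)(λ) for all f ∈ H(K_S) and λ ∈ 𝔹ᵈ, which is contractive: Σⱼ ‖Aⱼf‖² ≤ ‖f‖² - ‖f(0)‖². Let C : H(K_S) → Y be evaluation at 0. Then f(λ) = C(I - Z(λ)A)⁻¹f for all f ∈ H(K_S) and λ ∈ 𝔹ᵈ. -/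
open ContinuousLinearMap

/-- An (abstract) realization of the reproducing kernel Hilbert space of an
`L(V)`-valued positive kernel `k` on `Ω`. -/
structure AbstractRKHS (Ω : Type*) (V : Type*) [NormedAddCommGroup V] [InnerProductSpace ℂ V]
    (k : Ω → Ω → V →L[ℂ] V)
    (H : Type*) [NormedAddCommGroup H] [InnerProductSpace ℂ H] where
  toFun : H →ₗ[ℂ] (Ω → V)
  kElem : Ω → V → H
  kElem_apply : ∀ (ζ : Ω) (v : V) (l : Ω), toFun (kElem ζ v) l = k l ζ v
  reproducing : ∀ (f : H) (ζ : Ω) (v : V),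
    (inner ℂ (kElem ζ v) f : ℂ) = inner ℂ v (toFun f ζ)
  dense_span :
    (Submodule.span ℂ (Set.range fun p : Ω × V => kElem p.1 p.2)).topologicalClosure = ⊤

/-!
Put `T = Σⱼ λⱼ Aⱼ = Z(λ)A`. By Cauchy–Schwarz and contractivity of the Gleason solution,
`‖T‖ ≤ ‖λ‖ < 1`, so `I - T` is invertible. The Gleason relation applied to `g` reads
`((I - T) g)(λ) = g(0) = C g`; taking `g = (I - T)⁻¹ f` gives `f(λ) = C (I - T)⁻¹ f`.
-/

theorem norm_sum_smul_le_norm_mul_sqrt {𝕜 ι E : Type*} [RCLike 𝕜] [Fintype ι]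
    [SeminormedAddCommGroup E] [NormedSpace 𝕜 E] (c : EuclideanSpace 𝕜 ι) (v : ι → E) :
    ‖∑ j, c j • v j‖ ≤ ‖c‖ * √(∑ j, ‖v j‖ ^ 2) :=
  calc ‖∑ j, c j • v j‖ ≤ ∑ j, ‖c j‖ * ‖v j‖ := by
        simpa only [norm_smul] using norm_sum_le Finset.univ fun j => c j • v j
    _ ≤ √(∑ j, ‖c j‖ ^ 2) * √(∑ j, ‖v j‖ ^ 2) := Real.sum_mul_le_sqrt_mul_sqrt _ _ _
    _ = ‖c‖ * √(∑ j, ‖v j‖ ^ 2) := by rw [EuclideanSpace.norm_eq]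

theorem opNorm_sum_smul_le_of_sum_sq_norm_le {𝕜 ι E F : Type*} [RCLike 𝕜] [Fintype ι]
    [SeminormedAddCommGroup E] [NormedSpace 𝕜 E] [SeminormedAddCommGroup F] [NormedSpace 𝕜 F]
    (c : EuclideanSpace 𝕜 ι) (A : ι → E →L[𝕜] F) (hA : ∀ x, ∑ j, ‖A j x‖ ^ 2 ≤ ‖x‖ ^ 2) :
    ‖∑ j, c j • A j‖ ≤ ‖c‖ :=
  ContinuousLinearMap.opNorm_le_bound _ (norm_nonneg c) fun x => by
    calc ‖(∑ j, c j • A j) x‖ = ‖∑ j, c j • A j x‖ := by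
          simp only [sum_apply, smul_apply]
      _ ≤ ‖c‖ * √(∑ j, ‖A j x‖ ^ 2) := norm_sum_smul_le_norm_mul_sqrt c _
      _ ≤ ‖c‖ * ‖x‖ := by
          gcongr
          exact (Real.sqrt_le_sqrt (hA x)).trans_eq (Real.sqrt_sq (norm_nonneg x))

theorem stmt13 {d : ℕ}
    {Y : Type*}
    [NormedAddCommGroup Y] [InnerProductSpace ℂ Y]
    (K : {l : EuclideanSpace ℂ (Fin d) // ‖l‖ < 1} →
         {l : EuclideanSpace ℂ (Fin d) // ‖l‖ < 1} → Y →L[ℂ] Y)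
    {H : Type*} [NormedAddCommGroup H] [InnerProductSpace ℂ H] [CompleteSpace H]
    (r : AbstractRKHS {l : EuclideanSpace ℂ (Fin d) // ‖l‖ < 1} Y K H)
    (A : Fin d → H →L[ℂ] H)
    (hGleason : ∀ (f : H) (l : {l : EuclideanSpace ℂ (Fin d) // ‖l‖ < 1}),
      r.toFun f l - r.toFun f ⟨0, by simp⟩ = ∑ j, l.1 j • r.toFun (A j f) l)
    (hContr : ∀ f : H,
      ∑ j, ‖A j f‖ ^ 2 ≤ ‖f‖ ^ 2 - ‖r.toFun f ⟨0, by simp⟩‖ ^ 2)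
    (Cop : H →L[ℂ] Y)
    (hC : ∀ f : H, Cop f = r.toFun f ⟨0, by simp⟩) :
    ∀ (f : H) (l : {l : EuclideanSpace ℂ (Fin d) // ‖l‖ < 1}),
      r.toFun f l = Cop (Ring.inverse (1 - ∑ j, l.1 j • A j) f) := by
  intro f l
  set T : H →L[ℂ] H := ∑ j, l.1 j • A j
  have hT : ‖T‖ < 1 :=
    (opNorm_sum_smul_le_of_sum_sq_norm_le l.1 A fun g =>
      (hContr g).trans (sub_le_self _ (sq_nonneg _))).trans_lt l.2
  have hGleason_one_sub : ∀ g, r.toFun ((1 - T) g) l = Cop g := fun g => by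
    simp only [T, sub_apply, one_apply_eq_self, sum_apply, smul_apply, map_sub, map_sum,
      map_smul, Pi.sub_apply, Finset.sum_apply, Pi.smul_apply, hC]
    rw [← hGleason g l, sub_sub_cancel]
  calc r.toFun f l = r.toFun ((1 - T) (Ring.inverse (1 - T) f)) l := by
        rw [← mul_apply_eq_comp, Ring.mul_inverse_cancel _ (isUnit_one_sub_of_norm_lt_one hT),
          one_apply_eq_self]
    _ = Cop (Ring.inverse (1 - T) f) := hGleason_one_sub _
end

section
/- Under the same setup (contractive Gleason solution A on H(K_S), C = evaluation at 0), the kernel functions satisfy K_S(·,ζ)y = (I - A*Z(ζ)*)⁻¹C*y for every ζ ∈ 𝔹ᵈ and y ∈ Y; consequently K_S(λ,ζ) = C(I - Z(λ)A)⁻¹(I - A*Z(ζ)*)⁻¹C* for all λ, ζ ∈ 𝔹ᵈ. -/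
open ContinuousLinearMap

/-!
Contractivity makes `A` a row contraction, so `‖Z(λ)A‖ ≤ ‖λ‖ < 1` and `I - Z(λ)A` is invertible
by a Neumann series. Applying the Gleason identity to `g = (I - Z(λ)A)⁻¹ f` gives
`f(λ) = g(λ) - Z(λ)(Ag)(λ) = g(0) = C (I - Z(λ)A)⁻¹ f`. Hence evaluation at `ζ` is the bounded
operator `C (I - Z(ζ)A)⁻¹`, whose adjoint is `K_S(·,ζ)` by the reproducing property; evaluating
`K_S(·,ζ)y` at `λ` in the same way gives the kernel formula.
-/

def IsRowContraction {𝕜 ι E F : Type*} [RCLike 𝕜] [Fintype ι]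
    [NormedAddCommGroup E] [NormedSpace 𝕜 E] [NormedAddCommGroup F] [NormedSpace 𝕜 F]
    (A : ι → E →L[𝕜] F) : Prop :=
  ∀ f, ∑ j, ‖A j f‖ ^ 2 ≤ ‖f‖ ^ 2

section RowContraction

variable {𝕜 ι E : Type*} [RCLike 𝕜] [Fintype ι] [NormedAddCommGroup E] [NormedSpace 𝕜 E]

theorem IsRowContraction.opNorm_sum_smul_le {F : Type*} [NormedAddCommGroup F]
    [NormedSpace 𝕜 F] {A : ι → E →L[𝕜] F} (hA : IsRowContraction A)
    (l : EuclideanSpace 𝕜 ι) : ‖∑ j, l j • A j‖ ≤ ‖l‖ := by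
  refine opNorm_le_bound _ (norm_nonneg _) fun f => ?_
  have hsum : ‖(∑ j, l j • A j) f‖ ≤ ∑ j, ‖l j‖ * ‖A j f‖ := by
    rw [sum_apply]
    refine (norm_sum_le _ _).trans (Finset.sum_le_sum fun j _ => ?_)
    rw [smul_apply, norm_smul]
  have hl : ∑ j, ‖l j‖ ^ 2 = ‖l‖ ^ 2 := by
    rw [EuclideanSpace.norm_eq, Real.sq_sqrt (by positivity)]
  have hcs := Finset.sum_mul_sq_le_sq_mul_sq Finset.univ (fun j => ‖l j‖) (fun j => ‖A j f‖)
  have hcs' : (∑ j, ‖l j‖ * ‖A j f‖) ^ 2 ≤ (‖l‖ * ‖f‖) ^ 2 := by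
    rw [mul_pow, ← hl]
    exact hcs.trans (mul_le_mul_of_nonneg_left (hA f) (by positivity))
  exact hsum.trans (abs_le_of_sq_le_sq' hcs' (by positivity)).2

theorem IsRowContraction.isUnit_one_sub_sum_smul [CompleteSpace E] {A : ι → E →L[𝕜] E}
    (hA : IsRowContraction A) {l : EuclideanSpace 𝕜 ι} (hl : ‖l‖ < 1) :
    IsUnit (1 - ∑ j, l j • A j) :=
  isUnit_one_sub_of_norm_lt_one ((hA.opNorm_sum_smul_le l).trans_lt hl)

end RowContraction

theorem star_one_sub_sum_smul {𝕜 ι E : Type*} [RCLike 𝕜] [Fintype ι]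
    [NormedAddCommGroup E] [InnerProductSpace 𝕜 E] [CompleteSpace E]
    (c : ι → 𝕜) (A : ι → E →L[𝕜] E) :
    star (1 - ∑ j, c j • A j) = 1 - ∑ j, starRingEnd 𝕜 (c j) • adjoint (A j) := by
  simp only [star_sub, star_one, star_sum, star_smul, star_eq_adjoint, RCLike.star_def]

theorem apply_eq_apply_ring_inverse {𝕜 ι E Ω Y : Type*} [RCLike 𝕜] [Fintype ι]
    [NormedAddCommGroup E] [NormedSpace 𝕜 E] [AddCommGroup Y] [Module 𝕜 Y]
    (ev : E →ₗ[𝕜] Ω → Y) (l o : Ω) (c : ι → 𝕜) (A : ι → E →L[𝕜] E)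
    (hG : ∀ f, ev f l - ev f o = ∑ j, c j • ev (A j f) l)
    (hu : IsUnit (1 - ∑ j, c j • A j)) (f : E) :
    ev f l = ev (Ring.inverse (1 - ∑ j, c j • A j) f) o := by
  set g := Ring.inverse (1 - ∑ j, c j • A j) f
  have hf : f = g - ∑ j, c j • A j g := by
    have := congr($(Ring.mul_inverse_cancel _ hu) f)
    simpa [mul_apply] using this.symm
  calc ev f l = ev g l - ∑ j, c j • ev (A j g) l := by
        rw [hf, map_sub, map_sum]
        simp only [Pi.sub_apply, Finset.sum_apply, map_smul, Pi.smul_apply]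
    _ = ev g o := by rw [← hG g, sub_sub_cancel]

theorem RKHS'.kElem_eq_adjoint_apply {Ω V H : Type*} [NormedAddCommGroup V]
    [InnerProductSpace ℂ V] [CompleteSpace V] [NormedAddCommGroup H] [InnerProductSpace ℂ H]
    [CompleteSpace H] {k : Ω → Ω → V →L[ℂ] V} (r : RKHS' Ω V k H) {ζ : Ω} (T : H →L[ℂ] V)
    (hT : ∀ f, r.toFun f ζ = T f) (v : V) : r.kElem ζ v = adjoint T v :=
  ext_inner_right ℂ fun f => by rw [r.reproducing, adjoint_inner_left, hT]

theorem stmt14 {d : ℕ}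
    {Y : Type*}
    [NormedAddCommGroup Y] [InnerProductSpace ℂ Y] [CompleteSpace Y]
    (K : {l : EuclideanSpace ℂ (Fin d) // ‖l‖ < 1} →
         {l : EuclideanSpace ℂ (Fin d) // ‖l‖ < 1} → Y →L[ℂ] Y)
    {H : Type*} [NormedAddCommGroup H] [InnerProductSpace ℂ H] [CompleteSpace H]
    (r : RKHS' {l : EuclideanSpace ℂ (Fin d) // ‖l‖ < 1} Y K H)
    (A : Fin d → H →L[ℂ] H)
    (hGleason : ∀ (f : H) (l : {l : EuclideanSpace ℂ (Fin d) // ‖l‖ < 1}),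
      r.toFun f l - r.toFun f ⟨0, by simp⟩ = ∑ j, l.1 j • r.toFun (A j f) l)
    (hContr : ∀ f : H,
      ∑ j, ‖A j f‖ ^ 2 ≤ ‖f‖ ^ 2 - ‖r.toFun f ⟨0, by simp⟩‖ ^ 2)
    (Cop : H →L[ℂ] Y)
    (hC : ∀ f : H, Cop f = r.toFun f ⟨0, by simp⟩) :
    (∀ (z : {l : EuclideanSpace ℂ (Fin d) // ‖l‖ < 1}) (y : Y),
      r.kElem z y =
        Ring.inverse (1 - ∑ j, (starRingEnd ℂ) (z.1 j) • adjoint (A j))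
          (adjoint Cop y)) ∧
    (∀ l z : {l : EuclideanSpace ℂ (Fin d) // ‖l‖ < 1},
      K l z =
        Cop ∘L Ring.inverse (1 - ∑ j, l.1 j • A j) ∘L
          Ring.inverse (1 - ∑ j, (starRingEnd ℂ) (z.1 j) • adjoint (A j)) ∘L
          adjoint Cop) := by
  have hA : IsRowContraction A := fun f => (hContr f).trans (sub_le_self _ (sq_nonneg _))
  have heval : ∀ f l, r.toFun f l = Cop (Ring.inverse (1 - ∑ j, l.1 j • A j) f) := by
    intro f l
    rw [hC]
    exact apply_eq_apply_ring_inverse r.toFun l _ (fun j => l.1 j) A (hGleason · l)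
      (hA.isUnit_one_sub_sum_smul l.2) f
  have hkElem : ∀ z y, r.kElem z y =
      Ring.inverse (1 - ∑ j, (starRingEnd ℂ) (z.1 j) • adjoint (A j)) (adjoint Cop y) := by
    intro z y
    rw [r.kElem_eq_adjoint_apply (Cop ∘L Ring.inverse (1 - ∑ j, z.1 j • A j)) (heval · z),
      adjoint_comp, ← star_eq_adjoint (Ring.inverse _), ← Ring.inverse_star,
      star_one_sub_sum_smul]
    rfl
  refine ⟨hkElem, fun l z => ?_⟩
  ext v
  rw [← r.kElem_apply z v l, heval, hkElem]
  rfl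
end

section
/- For γ ∈ ℂ, let A_{γ,1} = [[0,1/4,0],[0,0,0],[1/2+γ,0,0]] and A_{γ,2} = [[0,0,1/4],[1/2-γ,0,0],[0,0,0]] and C = [1/2,0,0]. Then C(I - λ₁A_{γ,1} - λ₂A_{γ,2})⁻¹ is independent of γ (equal to (1/2)[4/(4-λ₁λ₂), λ₁/(4-λ₁λ₂), λ₂/(4-λ₁λ₂)]), and the pair (C, (A_{γ,1}, A_{γ,2})) is contractive (A_{γ,1}*A_{γ,1} + A_{γ,2}*A_{γ,2} + C*C ≤ I₃) if and only if |γ| ≤ 1/(2√2) with strict contractivity for |γ| < 1/(2√2). -/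
open Matrix ComplexOrder

noncomputable def ex18C : Matrix (Fin 1) (Fin 3) ℂ := !![1/2, 0, 0]

noncomputable def ex18A1 (γ : ℂ) : Matrix (Fin 3) (Fin 3) ℂ :=
  !![0, 1/4, 0; 0, 0, 0; 1/2 + γ, 0, 0]

noncomputable def ex18A2 (γ : ℂ) : Matrix (Fin 3) (Fin 3) ℂ :=
  !![0, 0, 1/4; 1/2 - γ, 0, 0; 0, 0, 0]

lemma ex18_c0 (γ : ℂ) :
    1 - (star (1/2 + γ) * (1/2 + γ) + star (1/2 - γ) * (1/2 - γ) + (1/2 : ℂ) * (1/2))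
      = (((1:ℝ)/4 - 2 * ‖γ‖ ^ 2 : ℝ) : ℂ) := by
  have hn : (‖γ‖ : ℝ) ^ 2 = γ.re ^ 2 + γ.im ^ 2 := by
    rw [Complex.sq_norm, Complex.normSq_apply]; ring
  have key : ∀ z : ℂ, star z * z = (Complex.normSq z : ℂ) := fun z => by
    rw [Complex.star_def, mul_comm, Complex.mul_conj]
  rw [key, key]
  have : ((1:ℂ)/2 * (1/2)) = (((1:ℝ)/4 : ℝ) : ℂ) := by norm_num
  rw [this, show (1:ℂ) = ((1:ℝ) : ℂ) from rfl]
  norm_cast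
  rw [hn]
  simp [Complex.normSq_apply, Complex.add_re, Complex.add_im, Complex.sub_re, Complex.sub_im]
  ring

lemma ex18_ineq (γ : ℂ) : (0 : ℝ) ≤ (1:ℝ)/4 - 2 * ‖γ‖ ^ 2 ↔ ‖γ‖ ≤ 1 / (2 * Real.sqrt 2) := by
  have h2 : Real.sqrt 2 ^ 2 = 2 := Real.sq_sqrt (by norm_num)
  have hp : (0:ℝ) < Real.sqrt 2 := Real.sqrt_pos.mpr (by norm_num)
  have hg : (0:ℝ) ≤ ‖γ‖ := norm_nonneg _
  rw [le_div_iff₀ (by positivity)]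
  constructor <;> intro h <;> nlinarith [sq_nonneg (‖γ‖ * (2 * Real.sqrt 2) - 1)]

lemma ex18_ineq' (γ : ℂ) : ‖γ‖ < 1 / (2 * Real.sqrt 2) → (0 : ℝ) < (1:ℝ)/4 - 2 * ‖γ‖ ^ 2 := by
  have h2 : Real.sqrt 2 ^ 2 = 2 := Real.sq_sqrt (by norm_num)
  have hp : (0:ℝ) < Real.sqrt 2 := Real.sqrt_pos.mpr (by norm_num)
  have hg : (0:ℝ) ≤ ‖γ‖ := norm_nonneg _
  rw [lt_div_iff₀ (by positivity)]
  intro h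
  nlinarith [sq_nonneg (‖γ‖ * (2 * Real.sqrt 2) - 1)]

/-- For the perturbed matrices `A_{γ,1}, A_{γ,2}` and `C = [1/2,0,0]`:
`C(I - λ₁A_{γ,1} - λ₂A_{γ,2})⁻¹` is independent of `γ` (and equal to
`(1/2)[4/(4-λ₁λ₂), λ₁/(4-λ₁λ₂), λ₂/(4-λ₁λ₂)]`), and the pair
`(C, (A_{γ,1}, A_{γ,2}))` is contractive iff `|γ| ≤ 1/(2√2)`, with strict
contractivity (positive definiteness of the defect) when `|γ| < 1/(2√2)`. -/
theorem stmt18 (γ : ℂ) :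
    (∀ l1 l2 : ℂ, ‖l1‖ ^ 2 + ‖l2‖ ^ 2 < 1 →
      IsUnit (1 - l1 • ex18A1 γ - l2 • ex18A2 γ) ∧
      ex18C * (1 - l1 • ex18A1 γ - l2 • ex18A2 γ)⁻¹ =
        (1 / 2 : ℂ) •
          !![4 / (4 - l1 * l2), l1 / (4 - l1 * l2), l2 / (4 - l1 * l2)]) ∧
    ((1 - ((ex18A1 γ)ᴴ * ex18A1 γ + (ex18A2 γ)ᴴ * ex18A2 γ +
        ex18Cᴴ * ex18C)).PosSemidef ↔ ‖γ‖ ≤ 1 / (2 * Real.sqrt 2)) ∧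
    (‖γ‖ < 1 / (2 * Real.sqrt 2) →
      (1 - ((ex18A1 γ)ᴴ * ex18A1 γ + (ex18A2 γ)ᴴ * ex18A2 γ +
        ex18Cᴴ * ex18C)).PosDef) := by
  have hD : 1 - ((ex18A1 γ)ᴴ * ex18A1 γ + (ex18A2 γ)ᴴ * ex18A2 γ + ex18Cᴴ * ex18C)
      = Matrix.diagonal ![(((1:ℝ)/4 - 2 * ‖γ‖ ^ 2 : ℝ) : ℂ), 15/16, 15/16] := by
    rw [← ex18_c0 γ]
    ext i j
    fin_cases i <;> fin_cases j <;>
      simp [ex18A1, ex18A2, ex18C, Matrix.mul_apply, Fin.sum_univ_three,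
        Matrix.one_apply, Matrix.diagonal, Matrix.conjTranspose_apply,
        Matrix.vecHead, Matrix.vecTail, map_ofNat, map_inv₀, Function.comp] <;> ring_nf
  refine ⟨?_, ?_, ?_⟩
  · intro l1 l2 h
    have h1 : ‖l1‖ < 1 := by nlinarith [norm_nonneg l1, sq_nonneg ‖l2‖, norm_nonneg l2]
    have h2 : ‖l2‖ < 1 := by nlinarith [norm_nonneg l2, sq_nonneg ‖l1‖, norm_nonneg l1]
    have hne : (4 : ℂ) - l1 * l2 ≠ 0 := by
      intro hc
      have h12 : l1 * l2 = 4 := by linear_combination -hc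
      have : ‖l1 * l2‖ < 1 := by
        rw [norm_mul]
        calc ‖l1‖ * ‖l2‖ ≤ ‖l1‖ * 1 := by
              exact mul_le_mul_of_nonneg_left h2.le (norm_nonneg _)
          _ < 1 := by rw [mul_one]; exact h1
      rw [h12] at this
      simp at this
    set M := 1 - l1 • ex18A1 γ - l2 • ex18A2 γ with hMdef
    have hM : M = !![1, -(l1/4), -(l2/4); -(l2*(1/2-γ)), 1, 0; -(l1*(1/2+γ)), 0, 1] := by
      ext i j
      fin_cases i <;> fin_cases j <;>
        simp [hMdef, ex18A1, ex18A2, Matrix.one_apply,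
          Matrix.vecHead, Matrix.vecTail] <;> ring_nf
    have hdet : M.det = (4 - l1 * l2) / 4 := by
      rw [hM, Matrix.det_fin_three]
      simp
      ring
    have hu : IsUnit M.det := by
      rw [hdet]
      exact isUnit_iff_ne_zero.mpr (div_ne_zero hne (by norm_num))
    refine ⟨(Matrix.isUnit_iff_isUnit_det _).mpr hu, ?_⟩
    have hXM : ((1 / 2 : ℂ) •
        !![4 / (4 - l1 * l2), l1 / (4 - l1 * l2), l2 / (4 - l1 * l2)]) * M = ex18C := by
      rw [hM]
      ext i j
      fin_cases i <;> fin_cases j <;>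
        · simp [ex18C, Matrix.mul_apply, Fin.sum_univ_three]
          field_simp
          ring
    rw [← hXM, Matrix.mul_assoc, Matrix.mul_nonsing_inv _ hu, Matrix.mul_one]
  · rw [hD, Matrix.posSemidef_diagonal_iff, ← ex18_ineq γ]
    have h15 : (0:ℂ) ≤ 15/16 := by
      rw [show (15/16 : ℂ) = (((15:ℝ)/16 : ℝ) : ℂ) by norm_num]
      exact Complex.zero_le_real.mpr (by norm_num)
    constructor
    · intro h
      have h0 := h 0
      rw [show (![(((1:ℝ)/4 - 2 * ‖γ‖ ^ 2 : ℝ) : ℂ), 15/16, 15/16]) 0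
          = (((1:ℝ)/4 - 2 * ‖γ‖ ^ 2 : ℝ) : ℂ) from rfl] at h0
      exact Complex.zero_le_real.mp h0
    · intro h i
      fin_cases i
      · exact Complex.zero_le_real.mpr h
      · exact h15
      · exact h15
  · intro h
    rw [hD, Matrix.posDef_diagonal_iff]
    have h15 : (0:ℂ) < 15/16 := by
      rw [show (15/16 : ℂ) = (((15:ℝ)/16 : ℝ) : ℂ) by norm_num]
      exact Complex.zero_lt_real.mpr (by norm_num)
    intro i
    fin_cases i
    · exact Complex.zero_lt_real.mpr (ex18_ineq' γ h)
    · exact h15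
    · exact h15
end
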